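/- Exactly one of the following two statements holds: (1) R₂ ⊆ ℝ² ∖ int(D₀) and R₂ ∩ int(D_i) = ∅ for all 1 ≤ i ≤ h; or (2) there exists a unique index i with 1 ≤ i ≤ h such that R₂ ⊆ D_i and R₂ ∩ int(D_j) = ∅ for all 1 ≤ j ≤ h with j ≠ i. (This is Lemma A.1 (the enclosure lemma) of the paper: a second region either lies outside the outer disk of the first region, or is enclosed in exactly one of its holes.) -/

import Mathlib

open Set

/-- A topological closed disk in the plane: a subset homeomorphic (with its
subspace topology) to the closed unit disk in `ℝ²`. -/
def IsTopClosedDisk (D : Set (EuclideanSpace ℝ (Fin 2))) : Prop :=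
  Nonempty (D ≃ₜ (Metric.closedBall (0 : EuclideanSpace ℝ (Fin 2)) 1 : Set (EuclideanSpace ℝ (Fin 2))))

/-!
The interior `U` of `R₂` is open and connected, and it is covered by the closed sets
`(int D₀)ᶜ, D₁, …, D_h`: a point of `U ∩ int D₀` outside all holes would lie in `int R₁`. Any two
of these closed sets meet in at most one point. In dimension two, removing these finitely many
points leaves `U` connected, and what remains is partitioned by the cover, so `U` lies in a single
member of it. Since `R₂ ⊆ closure U`, so does `R₂`; and `R₂` misses an open set `O` as soon as
`U ∩ O` is countable, because nonempty open sets of the plane are uncountable.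
-/

open Metric Topology

section Topology

variable {X : Type*} [TopologicalSpace X]

theorem IsPreconnected.of_subset_closure_of_nhds {U S : Set X} (hU : IsPreconnected U)
    (hSU : S ⊆ U) (hUS : U ⊆ closure S)
    (hloc : ∀ x ∈ U, ∃ V ∈ 𝓝 x, IsPreconnected (V ∩ S)) : IsPreconnected S := by
  rw [isPreconnected_iff_subset_of_disjoint] at hU ⊢
  intro u v hu hv hSuv huv
  -- `interior (u ∪ Sᶜ)` is the set of points near which `S` lies in `u`
  have hcover : U ⊆ interior (u ∪ Sᶜ) ∪ interior (v ∪ Sᶜ) := by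
    intro x hx
    obtain ⟨V, hV, hVS⟩ := hloc x hx
    have hVuv : V ∩ S ∩ (u ∩ v) = ∅ :=
      subset_empty_iff.1 (huv ▸ inter_subset_inter_left _ inter_subset_right)
    rcases isPreconnected_iff_subset_of_disjoint.1 hVS u v hu hv
      (inter_subset_right.trans hSuv) hVuv with hVu | hVv
    · refine Or.inl (mem_interior_iff_mem_nhds.2 (Filter.mem_of_superset hV fun y hy => ?_))
      by_cases hyS : y ∈ S
      exacts [Or.inl (hVu ⟨hy, hyS⟩), Or.inr hyS]
    · refine Or.inr (mem_interior_iff_mem_nhds.2 (Filter.mem_of_superset hV fun y hy => ?_))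
      by_cases hyS : y ∈ S
      exacts [Or.inl (hVv ⟨hy, hyS⟩), Or.inr hyS]
  have hdisj : U ∩ (interior (u ∪ Sᶜ) ∩ interior (v ∪ Sᶜ)) = ∅ := by
    rw [← interior_inter, ← inter_union_distrib_right, eq_empty_iff_forall_notMem]
    rintro x ⟨hxU, hx⟩
    obtain ⟨y, hy, hyS⟩ := mem_closure_iff.1 (hUS hxU) _ isOpen_interior hx
    have hyuv := (interior_subset hy).resolve_right (not_not.2 hyS)
    exact (eq_empty_iff_forall_notMem.1 huv) y ⟨hyS, hyuv⟩
  refine (hU _ _ isOpen_interior isOpen_interior hcover hdisj).imp ?_ ?_ <;>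
    exact fun h x hx => ((interior_subset (h (hSU hx))).resolve_right (not_not.2 hx))

theorem IsPreconnected.exists_subset_of_closed_cover {ι : Type*} {S : Set X} {s : Finset ι}
    {F : ι → Set X} (hS : IsPreconnected S) (hne : S.Nonempty) (hF : ∀ i ∈ s, IsClosed (F i))
    (hcov : S ⊆ ⋃ i ∈ s, F i) (hdisj : (s : Set ι).Pairwise fun i j => S ∩ (F i ∩ F j) = ∅) :
    ∃ i ∈ s, S ⊆ F i := by
  classical
  obtain ⟨x, hx⟩ := hne
  obtain ⟨i, hi, hxi⟩ := mem_iUnion₂.1 (hcov hx)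
  have hcov' : S ⊆ F i ∪ ⋃ j ∈ s.erase i, F j := by
    intro y hy
    obtain ⟨j, hj, hyj⟩ := mem_iUnion₂.1 (hcov hy)
    by_cases hji : j = i
    · exact Or.inl (hji ▸ hyj)
    · exact Or.inr (mem_iUnion₂.2 ⟨j, Finset.mem_erase.2 ⟨hji, hj⟩, hyj⟩)
  have hdisj' : S ∩ (F i ∩ ⋃ j ∈ s.erase i, F j) = ∅ := by
    refine eq_empty_iff_forall_notMem.2 fun y ⟨hyS, hyi, hyU⟩ => ?_
    obtain ⟨j, hj, hyj⟩ := mem_iUnion₂.1 hyU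
    obtain ⟨hji, hj⟩ := Finset.mem_erase.1 hj
    exact (eq_empty_iff_forall_notMem.1 (hdisj hi hj (Ne.symm hji))) y ⟨hyS, hyi, hyj⟩
  rcases isPreconnected_iff_subset_of_disjoint_closed.1 hS _ _ (hF i hi)
    (isClosed_biUnion_finset fun j hj => hF j (Finset.mem_of_mem_erase hj)) hcov' hdisj'
    with hSi | hSrest
  · exact ⟨i, hi, hSi⟩
  · exact absurd hdisj' (nonempty_iff_ne_empty.1 ⟨x, hx, hxi, hSrest hx⟩)

end Topology

section NormedSpace

variable {E : Type*} [NormedAddCommGroup E] [NormedSpace ℝ E]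

theorem isPreconnected_ball_diff_countable (hE : 1 < Module.rank ℝ E) (c : E) (r : ℝ)
    {P : Set E} (hP : P.Countable) : IsPreconnected (ball c r \ P) := by
  rcases le_or_gt r 0 with hr | hr
  · simp [ball_eq_empty.2 hr, isPreconnected_empty]
  let f := OpenPartialHomeomorph.univBall c r
  have hsource : f.source = univ := OpenPartialHomeomorph.univBall_source c r
  have hball : ball c r \ P = f '' (f ⁻¹' P)ᶜ := by
    rw [image_compl_preimage, ← image_univ, ← hsource, f.image_source_eq_target,
      OpenPartialHomeomorph.univBall_target c hr]
  have hinj : Function.Injective f := injOn_univ.1 (hsource ▸ f.injOn)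
  have hcont : Continuous f := continuousOn_univ.1 (hsource ▸ f.continuousOn)
  rw [hball]
  exact ((hP.preimage hinj).isConnected_compl_of_one_lt_rank hE).isPreconnected.image f
    hcont.continuousOn

theorem IsPreconnected.diff_countable (hE : 1 < Module.rank ℝ E) {U P : Set E} (hU : IsOpen U)
    (hUc : IsPreconnected U) (hP : P.Countable) : IsPreconnected (U \ P) := by
  have : Nontrivial E := rank_pos_iff_nontrivial.1 (zero_lt_one.trans hE)
  refine hUc.of_subset_closure_of_nhds sdiff_subset
    ((hP.dense_compl ℝ).open_subset_closure_inter hU) fun x hx => ?_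
  obtain ⟨ε, hε, hεU⟩ := isOpen_iff.1 hU x hx
  refine ⟨ball x ε, ball_mem_nhds x hε, ?_⟩
  rw [← inter_sdiff_assoc, inter_eq_left.2 hεU]
  exact isPreconnected_ball_diff_countable hE x ε hP

theorem IsPreconnected.exists_subset_of_closed_cover_of_countable_inter
    (hE : 1 < Module.rank ℝ E) {ι : Type*} {U : Set E} {s : Finset ι} {F : ι → Set E}
    (hUc : IsPreconnected U) (hU : IsOpen U) (hne : U.Nonempty) (hF : ∀ i ∈ s, IsClosed (F i))
    (hcov : U ⊆ ⋃ i ∈ s, F i) (hcount : (s : Set ι).Pairwise fun i j => (F i ∩ F j).Countable) :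
    ∃ i ∈ s, U ⊆ F i := by
  have : Nontrivial E := rank_pos_iff_nontrivial.1 (zero_lt_one.trans hE)
  set P := ⋃ i ∈ s, ⋃ j ∈ s, ⋃ (_ : i ≠ j), F i ∩ F j
  have hP : P.Countable := by
    refine s.countable_toSet.biUnion fun i hi => s.countable_toSet.biUnion fun j hj => ?_
    exact countable_iUnion fun hij => hcount hi hj hij
  have hdense : U ⊆ closure (U \ P) := (hP.dense_compl ℝ).open_subset_closure_inter hU
  obtain ⟨i, hi, hUi⟩ := (hUc.diff_countable hE hU hP).exists_subset_of_closed_cover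
    (hne.mono hdense |>.of_closure) (hF ·) (sdiff_subset.trans hcov) fun i hi j hj hij =>
      eq_empty_iff_forall_notMem.2 fun x ⟨⟨_, hxP⟩, hx⟩ =>
        hxP (mem_iUnion₂.2 ⟨i, hi, mem_iUnion₂.2 ⟨j, hj, mem_iUnion.2 ⟨hij, hx⟩⟩⟩)
  exact ⟨i, hi, hdense.trans (closure_minimal hUi (hF i hi))⟩

theorem inter_eq_empty_of_countable_interior_inter [Nontrivial E] {R O : Set E}
    (hR : R ⊆ closure (interior R)) (hO : IsOpen O) (hc : (interior R ∩ O).Countable) :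
    R ∩ O = ∅ := by
  have hempty : interior R ∩ O = ∅ := by
    rw [← (isOpen_interior.inter hO).interior_eq]
    exact interior_eq_empty_iff_dense_compl.2 (hc.dense_compl ℝ)
  exact disjoint_iff_inter_eq_empty.1
    ((disjoint_iff_inter_eq_empty.2 hempty).closure_left hO |>.mono_left hR)

end NormedSpace

theorem one_lt_rank_euclideanSpace_fin_two : 1 < Module.rank ℝ (EuclideanSpace ℝ (Fin 2)) := by
  rw [← Module.finrank_eq_rank, finrank_euclideanSpace_fin]
  exact_mod_cast one_lt_two

theorem IsTopClosedDisk.isCompact {D : Set (EuclideanSpace ℝ (Fin 2))} (hD : IsTopClosedDisk D) :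
    IsCompact D := by
  obtain ⟨e⟩ := hD
  have := isCompact_iff_compactSpace.1 (isCompact_closedBall (0 : EuclideanSpace ℝ (Fin 2)) 1)
  exact isCompact_iff_compactSpace.2 e.symm.compactSpace

section Holes

variable {X : Type*} [TopologicalSpace X] (D : ℕ → Set X)

def exteriorAndHoles (i : ℕ) : Set X := if i = 0 then (interior (D 0))ᶜ else D i

variable {D} {h : ℕ}

theorem isClosed_exteriorAndHoles (hclosed : ∀ i ≤ h, IsClosed (D i)) {i : ℕ} (hi : i ≤ h) :
    IsClosed (exteriorAndHoles D i) := by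
  unfold exteriorAndHoles
  split_ifs
  exacts [isOpen_interior.isClosed_compl, hclosed i hi]

theorem subset_biUnion_exteriorAndHoles (hclosed : ∀ i ≤ h, IsClosed (D i)) {U : Set X}
    (hdisj : interior (D 0 \ ⋃ i ∈ Icc 1 h, interior (D i)) ∩ U = ∅) :
    U ⊆ ⋃ i ∈ Finset.range (h + 1), exteriorAndHoles D i := by
  intro x hxU
  by_contra hxF
  simp only [mem_iUnion₂, Finset.mem_range, not_exists] at hxF
  have hx0 : x ∈ interior (D 0) := by simpa [exteriorAndHoles] using hxF 0 (by omega)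
  have hxholes : x ∉ ⋃ i ∈ Icc 1 h, D i := by
    simp only [mem_iUnion₂, not_exists]
    rintro i ⟨hi, hih⟩ hxi
    exact hxF i (by omega) (by simpa [exteriorAndHoles, show i ≠ 0 by omega] using hxi)
  have hsub : interior (D 0) \ ⋃ i ∈ Icc 1 h, D i ⊆ D 0 \ ⋃ i ∈ Icc 1 h, interior (D i) :=
    sdiff_subset_sdiff interior_subset (biUnion_mono subset_rfl fun _ _ => interior_subset)
  have hopen : IsOpen (interior (D 0) \ ⋃ i ∈ Icc 1 h, D i) :=
    isOpen_interior.sdiff ((finite_Icc 1 h).isClosed_biUnion fun i hi => hclosed i hi.2)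
  exact (eq_empty_iff_forall_notMem.1 hdisj) x ⟨interior_maximal hsub hopen ⟨hx0, hxholes⟩, hxU⟩

theorem pairwise_subsingleton_inter_exteriorAndHoles
    (hpair : ∀ i j, 1 ≤ i → i < j → j ≤ h → (D i ∩ D j).Subsingleton)
    (hout : ∀ i, 1 ≤ i → i ≤ h → (D i ∩ (interior (D 0))ᶜ).Subsingleton) :
    (Finset.range (h + 1) : Set ℕ).Pairwise fun i j =>
      (exteriorAndHoles D i ∩ exteriorAndHoles D j).Subsingleton := by
  intro i hi j hj hij
  simp only [Finset.coe_range, mem_Iio] at hi hj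
  wlog hlt : i < j generalizing i j
  · exact inter_comm (exteriorAndHoles D i) _ ▸
      this hij.symm hj hi ((not_lt.1 hlt).lt_of_ne hij.symm)
  rcases Nat.eq_zero_or_pos i with rfl | hi0
  · simpa [exteriorAndHoles, hlt.ne', inter_comm] using hout j hlt (by omega)
  · simpa [exteriorAndHoles, hi0.ne', (hi0.trans hlt).ne'] using hpair i j hi0 hlt (by omega)

end Holes

theorem enclosure_lemma_general
    (h : ℕ) (D : ℕ → Set (EuclideanSpace ℝ (Fin 2)))
    (hdisk : ∀ i ≤ h, IsTopClosedDisk (D i))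
    (hpair : ∀ i j, 1 ≤ i → i < j → j ≤ h → (D i ∩ D j).Subsingleton)
    (hout : ∀ i, 1 ≤ i → i ≤ h → (D i ∩ (interior (D 0))ᶜ).Subsingleton)
    (R₂ : Set (EuclideanSpace ℝ (Fin 2)))
    (hne : (interior R₂).Nonempty)
    (hconn : IsPreconnected (interior R₂))
    (hreg : R₂ ⊆ closure (interior R₂))
    (hdisj : interior (D 0 \ ⋃ i ∈ Icc 1 h, interior (D i)) ∩ interior R₂ = ∅) :
    Xor'
      (R₂ ⊆ (interior (D 0))ᶜ ∧ ∀ i, 1 ≤ i → i ≤ h → R₂ ∩ interior (D i) = ∅)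
      (∃! i, 1 ≤ i ∧ i ≤ h ∧ R₂ ⊆ D i ∧
        ∀ j, 1 ≤ j → j ≤ h → j ≠ i → R₂ ∩ interior (D j) = ∅) := by
  have hclosed : ∀ i ≤ h, IsClosed (D i) := fun i hi => (hdisk i hi).isCompact.isClosed
  have hFpair := pairwise_subsingleton_inter_exteriorAndHoles hpair hout
  obtain ⟨i, hi, hUi⟩ := hconn.exists_subset_of_closed_cover_of_countable_inter
    one_lt_rank_euclideanSpace_fin_two isOpen_interior hne
    (fun i hi => isClosed_exteriorAndHoles hclosed (Finset.mem_range_succ_iff.1 hi))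
    (subset_biUnion_exteriorAndHoles hclosed hdisj) (hFpair.mono' fun _ _ => Subsingleton.countable)
  have hih : i ≤ h := Finset.mem_range_succ_iff.1 hi
  have hRi : R₂ ⊆ exteriorAndHoles D i :=
    hreg.trans (closure_minimal hUi (isClosed_exteriorAndHoles hclosed hih))
  have hmiss (j : ℕ) (hj : 1 ≤ j) (hjh : j ≤ h) (hji : j ≠ i) : R₂ ∩ interior (D j) = ∅ := by
    refine inter_eq_empty_of_countable_interior_inter hreg isOpen_interior
      (Subsingleton.countable ?_)
    refine (hFpair hi (Finset.mem_range_succ_iff.2 hjh) hji.symm).anti (inter_subset_inter hUi ?_)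
    simpa [exteriorAndHoles, show j ≠ 0 by omega] using interior_subset
  have hmeets (k : ℕ) (hRk : R₂ ⊆ D k) : (R₂ ∩ interior (D k)).Nonempty :=
    hne.mono (subset_inter interior_subset (interior_mono hRk))
  refine (xor_iff_or_and_not_and _ _).2 ⟨?_,
    fun ⟨⟨_, hA⟩, k, ⟨hk, hkh, hRk, _⟩, _⟩ => (hmeets k hRk).ne_empty (hA k hk hkh)⟩
  rcases eq_or_ne i 0 with rfl | hi0
  · exact Or.inl ⟨by simpa [exteriorAndHoles] using hRi, fun j hj hjh => hmiss j hj hjh (by omega)⟩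
  · simp only [exteriorAndHoles, if_neg hi0] at hRi
    refine Or.inr ⟨i, ⟨by omega, hih, hRi, hmiss⟩, fun k ⟨_, _, _, hk⟩ => ?_⟩
    by_contra hki
    exact (hmeets i hRi).ne_empty (hk i (by omega) hih (Ne.symm hki))

/-- **Enclosure lemma** (Lemma A.1). Let `R₁ = D₀ \ ⋃_{i=1}^h int(D i)` be a
disk-with-holes region and `R₂` a second region whose interior is nonempty and
connected and does not meet `int R₁`. Then exactly one of the following holds:
(1) `R₂` lies outside `int D₀` and misses the interiors of all the holes; or
(2) `R₂` is enclosed in exactly one hole `D i` and misses the interiors of all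
the other holes. -/
theorem enclosure_lemma
    (h : ℕ) (D : ℕ → Set (EuclideanSpace ℝ (Fin 2)))
    (hdisk : ∀ i ≤ h, IsTopClosedDisk (D i))
    (hsub : ∀ i, 1 ≤ i → i ≤ h → D i ⊆ D 0)
    (hpair : ∀ i j, 1 ≤ i → i < j → j ≤ h → (D i ∩ D j).Subsingleton)
    (hout : ∀ i, 1 ≤ i → i ≤ h → (D i ∩ (interior (D 0))ᶜ).Subsingleton)
    (R₂ : Set (EuclideanSpace ℝ (Fin 2)))
    (hne : (interior R₂).Nonempty)
    (hconn : IsPreconnected (interior R₂))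
    (hreg : R₂ ⊆ closure (interior R₂))
    (hdisj : interior (D 0 \ ⋃ i ∈ Icc 1 h, interior (D i)) ∩ interior R₂ = ∅) :
    Xor'
      (R₂ ⊆ (interior (D 0))ᶜ ∧ ∀ i, 1 ≤ i → i ≤ h → R₂ ∩ interior (D i) = ∅)
      (∃! i, 1 ≤ i ∧ i ≤ h ∧ R₂ ⊆ D i ∧
        ∀ j, 1 ≤ j → j ≤ h → j ≠ i → R₂ ∩ interior (D j) = ∅) :=
  enclosure_lemma_general h D hdisk hpair hout R₂ hne hconn hreg hdisj
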